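/- arXiv:1404.1110 — 8 statements merged into one kernel-verified Lean document; each statement's English description precedes it below -/
import Mathlib

section
/- Consider the HSA dynamo system ẋ = x(y-1) - βz, ẏ = α(1-x²) - κy, ż = x - λz with β = κ = 0 and α ≠ 0. Then the function F₁(x,y,z) = α·ln(x) - α·x²/2 - y²/2 + y is a first integral of the system on the region x > 0, i.e., the derivative of F₁ along the vector field X = x(y-1)∂ₓ + α(1-x²)∂_y + (x-λz)∂_z vanishes identically on {x > 0}. -/
open Real

-- An `abbrev`, so that `rw` can match its partial maps against the unfolded lambdas below.
noncomputable abbrev hsaF₁ (α x y : ℝ) : ℝ := α * log x - α * x ^ 2 / 2 - y ^ 2 / 2 + y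

theorem hasDerivAt_hsaF₁_fst (α y : ℝ) {x : ℝ} (hx : x ≠ 0) :
    HasDerivAt (fun x' => hsaF₁ α x' y) (α * (1 - x ^ 2) / x) x :=
  ((((hasDerivAt_log hx).const_mul α).fun_sub
    (((hasDerivAt_pow 2 x).const_mul α).div_const 2)).sub_const (y ^ 2 / 2) |>.add_const y)
    |>.congr_deriv (by field_simp; ring)

theorem hasDerivAt_hsaF₁_snd (α x y : ℝ) :
    HasDerivAt (fun y' => hsaF₁ α x y') (1 - y) y :=
  ((((hasDerivAt_pow 2 y).div_const 2).const_sub (α * log x - α * x ^ 2 / 2)).fun_add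
    (hasDerivAt_id' y)).congr_deriv (by ring)

theorem stmt_0_general (α lam : ℝ) (x y z : ℝ) (hx : 0 < x) :
    (x * (y - 1)) *
        deriv (fun x' : ℝ => α * Real.log x' - α * x' ^ 2 / 2 - y ^ 2 / 2 + y) x
      + (α * (1 - x ^ 2)) *
        deriv (fun y' : ℝ => α * Real.log x - α * x ^ 2 / 2 - y' ^ 2 / 2 + y') y
      + (x - lam * z) *
        deriv (fun _z' : ℝ => α * Real.log x - α * x ^ 2 / 2 - y ^ 2 / 2 + y) z = 0 := by
  rw [(hasDerivAt_hsaF₁_fst α y hx.ne').deriv, (hasDerivAt_hsaF₁_snd α x y).deriv, deriv_const]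
  field_simp
  ring

/-- For the HSA dynamo with β = κ = 0 and α ≠ 0, the function
F₁(x,y,z) = α ln x - α x²/2 - y²/2 + y is a first integral on {x > 0}:
the derivative of F₁ along X = x(y-1)∂ₓ + α(1-x²)∂_y + (x-λz)∂_z vanishes. -/
theorem stmt_0 (α lam : ℝ) (hα : α ≠ 0) (x y z : ℝ) (hx : 0 < x) :
    (x * (y - 1)) *
        deriv (fun x' : ℝ => α * Real.log x' - α * x' ^ 2 / 2 - y ^ 2 / 2 + y) x
      + (α * (1 - x ^ 2)) *
        deriv (fun y' : ℝ => α * Real.log x - α * x ^ 2 / 2 - y' ^ 2 / 2 + y') y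
      + (x - lam * z) *
        deriv (fun _z' : ℝ => α * Real.log x - α * x ^ 2 / 2 - y ^ 2 / 2 + y) z = 0 :=
  stmt_0_general α lam x y z hx
end

section
/- Consider the HSA dynamo system with β = 0, κ ≠ 0, α = -κ(κ-1), and λ = 0. Then the function F₄(x,y,z) = ((y + κ - 1 - x·√κ·√(κ-1)) / (y + κ - 1 + x·√κ·√(κ-1))) · exp(2z·√κ·√(κ-1)) is a first integral of the vector field X = (x(y-1))∂ₓ + (α(1-x²) - κy)∂_y + x·∂_z on any open set where κ(κ-1) > 0 and y + κ - 1 + x√κ√(κ-1) ≠ 0 and y + κ - 1 - x√κ√(κ-1) ≠ 0, i.e., X F₄ = 0 there. -/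
/-- For the HSA dynamo with β = 0, λ = 0, κ ≠ 0, κ(κ-1) > 0 and
α = -κ(κ-1), the function
F₄ = ((y+κ-1 - x√κ√(κ-1))/(y+κ-1 + x√κ√(κ-1))) · exp(2z√κ√(κ-1))
satisfies X F₄ = 0 wherever both denominator factors are nonzero. -/
theorem stmt_1 (α κ : ℝ) (hκ : κ ≠ 0) (hκκ : κ * (κ - 1) > 0)
    (hα : α = -κ * (κ - 1)) (x y z : ℝ)
    (hden : y + κ - 1 + x * Real.sqrt κ * Real.sqrt (κ - 1) ≠ 0)
    (hnum : y + κ - 1 - x * Real.sqrt κ * Real.sqrt (κ - 1) ≠ 0) :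
    (x * (y - 1)) *
        deriv (fun x' : ℝ =>
          ((y + κ - 1 - x' * Real.sqrt κ * Real.sqrt (κ - 1)) /
            (y + κ - 1 + x' * Real.sqrt κ * Real.sqrt (κ - 1))) *
            Real.exp (2 * z * Real.sqrt κ * Real.sqrt (κ - 1))) x
      + (α * (1 - x ^ 2) - κ * y) *
        deriv (fun y' : ℝ =>
          ((y' + κ - 1 - x * Real.sqrt κ * Real.sqrt (κ - 1)) /
            (y' + κ - 1 + x * Real.sqrt κ * Real.sqrt (κ - 1))) *
            Real.exp (2 * z * Real.sqrt κ * Real.sqrt (κ - 1))) y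
      + x *
        deriv (fun z' : ℝ =>
          ((y + κ - 1 - x * Real.sqrt κ * Real.sqrt (κ - 1)) /
            (y + κ - 1 + x * Real.sqrt κ * Real.sqrt (κ - 1))) *
            Real.exp (2 * z' * Real.sqrt κ * Real.sqrt (κ - 1))) z = 0 := by
  simp only [mul_assoc] at hden hnum ⊢
  set s := Real.sqrt κ * Real.sqrt (κ - 1) with hs
  -- derivatives
  have hD : y + κ - 1 + x * s ≠ 0 := hden
  have hN : y + κ - 1 - x * s ≠ 0 := hnum
  have hx' : HasDerivAt (fun x' : ℝ =>
      (y + κ - 1 - x' * s) / (y + κ - 1 + x' * s) * Real.exp (2 * (z * s)))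
      (((-s) * (y + κ - 1 + x * s) - (y + κ - 1 - x * s) * s) / (y + κ - 1 + x * s) ^ 2
        * Real.exp (2 * (z * s))) x := by
    exact (((hasDerivAt_mul_const s).const_sub (y + κ - 1)).div
      ((hasDerivAt_mul_const s).const_add (y + κ - 1)) hD).mul_const _
  have hy' : HasDerivAt (fun y' : ℝ =>
      (y' + κ - 1 - x * s) / (y' + κ - 1 + x * s) * Real.exp (2 * (z * s)))
      ((1 * (y + κ - 1 + x * s) - (y + κ - 1 - x * s) * 1) / (y + κ - 1 + x * s) ^ 2
        * Real.exp (2 * (z * s))) y := by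
    exact (((((hasDerivAt_id y).add_const κ).sub_const 1).sub_const (x * s)).div
      ((((hasDerivAt_id y).add_const κ).sub_const 1).add_const (x * s)) hD).mul_const _
  have hz' : HasDerivAt (fun z' : ℝ =>
      (y + κ - 1 - x * s) / (y + κ - 1 + x * s) * Real.exp (2 * (z' * s)))
      ((y + κ - 1 - x * s) / (y + κ - 1 + x * s) * (Real.exp (2 * (z * s)) * (2 * s))) z := by
    have h1 : HasDerivAt (fun z' : ℝ => 2 * (z' * s)) (2 * s) z := by
      simpa using ((hasDerivAt_mul_const s).const_mul (2 : ℝ))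
    exact (h1.exp).const_mul _
  rw [hx'.deriv, hy'.deriv, hz'.deriv, hα]
  have key : x * ((y - 1) *
        (((-s) * (y + κ - 1 + x * s) - (y + κ - 1 - x * s) * s) / (y + κ - 1 + x * s) ^ 2
          * Real.exp (2 * (z * s))))
      + (-κ * (κ - 1) * (1 - x ^ 2) - κ * y) *
        ((1 * (y + κ - 1 + x * s) - (y + κ - 1 - x * s) * 1) / (y + κ - 1 + x * s) ^ 2
          * Real.exp (2 * (z * s)))
      + x * ((y + κ - 1 - x * s) / (y + κ - 1 + x * s) * (Real.exp (2 * (z * s)) * (2 * s)))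
      = 2 * s * x ^ 3 * Real.exp (2 * (z * s)) / (y + κ - 1 + x * s) ^ 2
        * (κ * (κ - 1) - s ^ 2) := by
    field_simp
    ring
  rw [key]
  rcases mul_pos_iff.mp hκκ with ⟨h1, h2⟩ | ⟨h1, h2⟩
  · have hs2 : s ^ 2 = κ * (κ - 1) := by
      rw [hs, mul_pow, Real.sq_sqrt h1.le, Real.sq_sqrt (by linarith : (0:ℝ) ≤ κ - 1)]
    rw [hs2]
    ring
  · have hs0 : s = 0 := by
      rw [hs, Real.sqrt_eq_zero_of_nonpos h1.le, zero_mul]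
    rw [hs0]
    ring
end

section
/- Consider the HSA dynamo system with β = 0, κ ≠ 0, and α = -κ(κ-1) ≠ 0. Let T(x,y) = √(-κ²(x²-1) + (y-1)² + κ(x² + 2y - 2)). Then F₃(x,y,z) = κ·log(2(κ + y - 1 + T)/(-x)) - T is a first integral of the vector field X = x(y-1)∂ₓ + (α(1-x²) - κy)∂_y + (x - λz)∂_z on any open subset of {x < 0} where the expression under the square root is positive and κ + y - 1 + T > 0. -/
/-!
Write `u = κ + y - 1`. Since `α = -κ(κ-1)`, the radicand is `α x² + u²`, so
`T = √(α x² + u²)` and `(u + T)(T - u) = α x²`. This gives `∂ₓF₃ = -(κ u + α x²)/(x T)`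
and `∂_y F₃ = (κ - u)/T = (1 - y)/T`, so
`X F₃ = (1 - y)(κ u + α - κ y)/T = (1 - y)(κ² - κ + α)/T = 0`.
-/

open Real

namespace HSA

/-- `F₃` as a function of `x` and `u = κ + y - 1`. -/
noncomputable def F₃ (κ α x u : ℝ) : ℝ :=
  κ * log (2 * (u + √(α * x ^ 2 + u ^ 2)) / (-x)) - √(α * x ^ 2 + u ^ 2)

variable {κ α x u : ℝ}

theorem hasDerivAt_F₃_fst (hS : 0 < α * x ^ 2 + u ^ 2) (hx : x ≠ 0)
    (hne : u + √(α * x ^ 2 + u ^ 2) ≠ 0) :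
    HasDerivAt (fun x' => F₃ κ α x' u)
      (-(κ * u + α * x ^ 2) / (x * √(α * x ^ 2 + u ^ 2))) x := by
  have hT2 : √(α * x ^ 2 + u ^ 2) ^ 2 = α * x ^ 2 + u ^ 2 := sq_sqrt hS.le
  have hrad : HasDerivAt (fun x' => α * x' ^ 2 + u ^ 2) (α * (2 * x)) x := by
    simpa using ((hasDerivAt_pow 2 x).const_mul α).add_const (u ^ 2)
  have hTx := hrad.sqrt hS.ne'
  have hquot := ((hTx.const_add u).const_mul 2).div (hasDerivAt_neg x) (neg_ne_zero.mpr hx)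
  have hlog := hquot.log (div_ne_zero (mul_ne_zero two_ne_zero hne) (neg_ne_zero.mpr hx))
  simp only [Pi.div_apply] at hlog
  refine ((hlog.const_mul κ).sub hTx).congr_deriv ?_
  field_simp
  linear_combination -κ * hT2

theorem hasDerivAt_F₃_snd (hS : 0 < α * x ^ 2 + u ^ 2) (hx : x ≠ 0)
    (hne : u + √(α * x ^ 2 + u ^ 2) ≠ 0) :
    HasDerivAt (fun u' => F₃ κ α x u') ((κ - u) / √(α * x ^ 2 + u ^ 2)) u := by
  have hrad : HasDerivAt (fun u' => α * x ^ 2 + u' ^ 2) (2 * u) u := by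
    simpa using (hasDerivAt_pow 2 u).const_add (α * x ^ 2)
  have hTu := hrad.sqrt hS.ne'
  have hquot := (((hasDerivAt_id u).add hTu).const_mul 2).div_const (-x)
  have hlog := hquot.log (div_ne_zero (mul_ne_zero two_ne_zero hne) (neg_ne_zero.mpr hx))
  simp only [Pi.add_apply, id] at hlog
  refine ((hlog.const_mul κ).sub hTu).congr_deriv ?_
  field_simp
  ring

end HSA

theorem stmt_2_general (α κ lam : ℝ) (hα : α = -κ * (κ - 1))
    (x y z : ℝ) (hx : x < 0)
    (hS : 0 < -κ ^ 2 * (x ^ 2 - 1) + (y - 1) ^ 2 + κ * (x ^ 2 + 2 * y - 2))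
    (hpos : 0 < κ + y - 1 +
      Real.sqrt (-κ ^ 2 * (x ^ 2 - 1) + (y - 1) ^ 2 + κ * (x ^ 2 + 2 * y - 2))) :
    (x * (y - 1)) *
        deriv (fun x' : ℝ =>
          κ * Real.log (2 * (κ + y - 1 +
              Real.sqrt (-κ ^ 2 * (x' ^ 2 - 1) + (y - 1) ^ 2 + κ * (x' ^ 2 + 2 * y - 2)))
            / (-x'))
          - Real.sqrt (-κ ^ 2 * (x' ^ 2 - 1) + (y - 1) ^ 2 + κ * (x' ^ 2 + 2 * y - 2))) x
      + (α * (1 - x ^ 2) - κ * y) *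
        deriv (fun y' : ℝ =>
          κ * Real.log (2 * (κ + y' - 1 +
              Real.sqrt (-κ ^ 2 * (x ^ 2 - 1) + (y' - 1) ^ 2 + κ * (x ^ 2 + 2 * y' - 2)))
            / (-x))
          - Real.sqrt (-κ ^ 2 * (x ^ 2 - 1) + (y' - 1) ^ 2 + κ * (x ^ 2 + 2 * y' - 2))) y
      + (x - lam * z) *
        deriv (fun _z' : ℝ =>
          κ * Real.log (2 * (κ + y - 1 +
              Real.sqrt (-κ ^ 2 * (x ^ 2 - 1) + (y - 1) ^ 2 + κ * (x ^ 2 + 2 * y - 2)))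
            / (-x))
          - Real.sqrt (-κ ^ 2 * (x ^ 2 - 1) + (y - 1) ^ 2 + κ * (x ^ 2 + 2 * y - 2))) z
      = 0 := by
  have hrad : ∀ x y : ℝ, -κ ^ 2 * (x ^ 2 - 1) + (y - 1) ^ 2 + κ * (x ^ 2 + 2 * y - 2)
      = α * x ^ 2 + (κ + y - 1) ^ 2 := fun x y => by rw [hα]; ring
  simp only [hrad, ← HSA.F₃.eq_1] at hS hpos ⊢
  have hFy : HasDerivAt (fun y' => HSA.F₃ κ α x (κ + y' - 1))
      ((κ - (κ + y - 1)) / √(α * x ^ 2 + (κ + y - 1) ^ 2)) y := by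
    have hu : HasDerivAt (fun y' : ℝ => κ + y' - 1) 1 y :=
      ((hasDerivAt_id' y).const_add κ).sub_const 1
    have hcomp := (HSA.hasDerivAt_F₃_snd (κ := κ) hS hx.ne hpos.ne').comp y hu
    rwa [mul_one] at hcomp
  rw [(HSA.hasDerivAt_F₃_fst hS hx.ne hpos.ne').deriv, hFy.deriv, deriv_const,
    mul_zero, add_zero]
  field_simp [hx.ne]
  subst hα
  ring

/-- For the HSA dynamo with β = 0, κ ≠ 0, α = -κ(κ-1) ≠ 0, with
T = √(-κ²(x²-1) + (y-1)² + κ(x²+2y-2)), the function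
F₃ = κ log(2(κ+y-1+T)/(-x)) - T satisfies X F₃ = 0 on {x < 0}, where the
radicand is positive and κ + y - 1 + T > 0. -/
theorem stmt_2 (α κ lam : ℝ) (hκ : κ ≠ 0) (hα : α = -κ * (κ - 1)) (hα0 : α ≠ 0)
    (x y z : ℝ) (hx : x < 0)
    (hS : 0 < -κ ^ 2 * (x ^ 2 - 1) + (y - 1) ^ 2 + κ * (x ^ 2 + 2 * y - 2))
    (hpos : 0 < κ + y - 1 +
      Real.sqrt (-κ ^ 2 * (x ^ 2 - 1) + (y - 1) ^ 2 + κ * (x ^ 2 + 2 * y - 2))) :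
    (x * (y - 1)) *
        deriv (fun x' : ℝ =>
          κ * Real.log (2 * (κ + y - 1 +
              Real.sqrt (-κ ^ 2 * (x' ^ 2 - 1) + (y - 1) ^ 2 + κ * (x' ^ 2 + 2 * y - 2)))
            / (-x'))
          - Real.sqrt (-κ ^ 2 * (x' ^ 2 - 1) + (y - 1) ^ 2 + κ * (x' ^ 2 + 2 * y - 2))) x
      + (α * (1 - x ^ 2) - κ * y) *
        deriv (fun y' : ℝ =>
          κ * Real.log (2 * (κ + y' - 1 +
              Real.sqrt (-κ ^ 2 * (x ^ 2 - 1) + (y' - 1) ^ 2 + κ * (x ^ 2 + 2 * y' - 2)))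
            / (-x))
          - Real.sqrt (-κ ^ 2 * (x ^ 2 - 1) + (y' - 1) ^ 2 + κ * (x ^ 2 + 2 * y' - 2))) y
      + (x - lam * z) *
        deriv (fun _z' : ℝ =>
          κ * Real.log (2 * (κ + y - 1 +
              Real.sqrt (-κ ^ 2 * (x ^ 2 - 1) + (y - 1) ^ 2 + κ * (x ^ 2 + 2 * y - 2)))
            / (-x))
          - Real.sqrt (-κ ^ 2 * (x ^ 2 - 1) + (y - 1) ^ 2 + κ * (x ^ 2 + 2 * y - 2))) z
      = 0 :=
  stmt_2_general α κ lam hα x y z hx hS hpos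
end

section
/- For the HSA dynamo vector field X = (x(y-1) - βz)∂ₓ + (α(1-x²))∂_y + x·∂_z (i.e., κ = λ = 0) with α ≠ 0, the function g(x,y,z) = -x²/2 + y/α - y²/(2α) - β·z²/2 satisfies X g = 1 - y; consequently exp(g) is an exponential factor with cofactor 1 - y. -/
/-!
Along the field, `X g = -x (x(y-1) - βz) + (1 - x²)(1 - y) - βxz = 1 - y`: the `βxz`-terms
cancel and `x²(1 - y) + (1 - x²)(1 - y) = 1 - y`. For the exponential, the chain rule gives
`X (exp g) = (X g) exp g`.
-/

open Real

noncomputable def lieDeriv (P Q R F : ℝ → ℝ → ℝ → ℝ) (x y z : ℝ) : ℝ :=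
  P x y z * deriv (fun x' => F x' y z) x + Q x y z * deriv (fun y' => F x y' z) y
    + R x y z * deriv (fun z' => F x y z') z

theorem lieDeriv_exp {P Q R F : ℝ → ℝ → ℝ → ℝ} {x y z : ℝ}
    (hx : DifferentiableAt ℝ (fun x' => F x' y z) x)
    (hy : DifferentiableAt ℝ (fun y' => F x y' z) y)
    (hz : DifferentiableAt ℝ (fun z' => F x y z') z) :
    lieDeriv P Q R (fun x y z => exp (F x y z)) x y z = lieDeriv P Q R F x y z * exp (F x y z) := by
  simp only [lieDeriv, deriv_exp hx, deriv_exp hy, deriv_exp hz]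
  ring

namespace HSADynamo

variable (α β : ℝ)

def fieldX (x y z : ℝ) : ℝ := x * (y - 1) - β * z

def fieldY (x _y _z : ℝ) : ℝ := α * (1 - x ^ 2)

def fieldZ (x _y _z : ℝ) : ℝ := x

noncomputable def g (x y z : ℝ) : ℝ := -x ^ 2 / 2 + y / α - y ^ 2 / (2 * α) - β * z ^ 2 / 2

variable {α β}

theorem hasDerivAt_g_x (x y z : ℝ) : HasDerivAt (fun x' => g α β x' y z) (-x) x := by
  have := ((((hasDerivAt_pow 2 x).neg.div_const 2).add_const (y / α)).sub_const
    (y ^ 2 / (2 * α))).sub_const (β * z ^ 2 / 2)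
  exact this.congr_deriv (by ring)

theorem hasDerivAt_g_y (x y z : ℝ) : HasDerivAt (fun y' => g α β x y' z) ((1 - y) / α) y := by
  have := (((hasDerivAt_const y (-x ^ 2 / 2)).add ((hasDerivAt_id' y).div_const α)).sub
    ((hasDerivAt_pow 2 y).div_const (2 * α))).sub_const (β * z ^ 2 / 2)
  exact this.congr_deriv (by ring)

theorem hasDerivAt_g_z (x y z : ℝ) : HasDerivAt (fun z' => g α β x y z') (-(β * z)) z := by
  have := (((hasDerivAt_pow 2 z).const_mul β).div_const 2).const_sub
    (-x ^ 2 / 2 + y / α - y ^ 2 / (2 * α))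
  exact this.congr_deriv (by ring)

theorem lieDeriv_g (hα : α ≠ 0) (x y z : ℝ) :
    lieDeriv (fieldX β) (fieldY α) fieldZ (g α β) x y z = 1 - y := by
  rw [lieDeriv, (hasDerivAt_g_x x y z).deriv, (hasDerivAt_g_y x y z).deriv,
    (hasDerivAt_g_z x y z).deriv]
  simp only [fieldX, fieldY, fieldZ]
  field_simp
  ring

theorem lieDeriv_exp_g (hα : α ≠ 0) (x y z : ℝ) :
    lieDeriv (fieldX β) (fieldY α) fieldZ (fun x y z => exp (g α β x y z)) x y z
      = (1 - y) * exp (g α β x y z) := by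
  rw [lieDeriv_exp (hasDerivAt_g_x x y z).differentiableAt (hasDerivAt_g_y x y z).differentiableAt
    (hasDerivAt_g_z x y z).differentiableAt, lieDeriv_g hα]

end HSADynamo

open HSADynamo in
/-- For the HSA dynamo with κ = λ = 0 and α ≠ 0, the function
g = -x²/2 + y/α - y²/(2α) - βz²/2 satisfies X g = 1 - y, so exp(g) is an
exponential factor with cofactor 1 - y. -/
theorem stmt_5 (α β : ℝ) (hα : α ≠ 0) (x y z : ℝ) :
    (x * (y - 1) - β * z) *
        deriv (fun x' : ℝ => -x' ^ 2 / 2 + y / α - y ^ 2 / (2 * α) - β * z ^ 2 / 2) x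
      + (α * (1 - x ^ 2)) *
        deriv (fun y' : ℝ => -x ^ 2 / 2 + y' / α - y' ^ 2 / (2 * α) - β * z ^ 2 / 2) y
      + x *
        deriv (fun z' : ℝ => -x ^ 2 / 2 + y / α - y ^ 2 / (2 * α) - β * z' ^ 2 / 2) z
      = 1 - y ∧
    ∀ x y z : ℝ,
      (x * (y - 1) - β * z) *
          deriv (fun x' : ℝ =>
            Real.exp (-x' ^ 2 / 2 + y / α - y ^ 2 / (2 * α) - β * z ^ 2 / 2)) x
        + (α * (1 - x ^ 2)) *
          deriv (fun y' : ℝ =>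
            Real.exp (-x ^ 2 / 2 + y' / α - y' ^ 2 / (2 * α) - β * z ^ 2 / 2)) y
        + x *
          deriv (fun z' : ℝ =>
            Real.exp (-x ^ 2 / 2 + y / α - y ^ 2 / (2 * α) - β * z' ^ 2 / 2)) z
        = (1 - y) * Real.exp (-x ^ 2 / 2 + y / α - y ^ 2 / (2 * α) - β * z ^ 2 / 2) :=
  ⟨lieDeriv_g hα x y z, lieDeriv_exp_g hα⟩
end

section
/- Let α, β, κ, λ be real numbers with α ≠ 0 and (αβ ≠ 0 or ακ ≠ 0). Then the HSA dynamo system ẋ = x(y-1) - βz, ẏ = α(1-x²) - κy, ż = x - λz admits no polynomial first integral: there is no nonconstant polynomial h ∈ ℝ[x,y,z] with (x(y-1) - βz)∂h/∂x + (α(1-x²) - κy)∂h/∂y + (x - λz)∂h/∂z = 0. -/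
/-!
Let `H a b c` be the coefficient of `x^a y^b z^c` in `h` and `n ≥ 1` the degree of `h`. In
degree `n + 1` the equation `X h = 0` only sees the quadratic part `x (y ∂ₓ - α x ∂_y)`, so the
top form is a polynomial in `α x² + y²` and `z`: its entries with odd exponent of `x` vanish and
the others are binomial multiples of the column entries `H 0 s c`. In degree `n`, the coefficients
of degree `n - 1` with odd exponent of `x` along a diagonal satisfy a linear recurrence with
positive coefficients, driven by `Δ = 2αβ(T + 1) H 0 (2T + 2) (c - 1) - (c + 1) H 0 (2T) (c + 1)`
and ending at zero, so `Δ = 0`. Together with `(κ b + λ c) H 0 b c = 0` these relations kill the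
column, hence the whole top form.
-/

open MvPolynomial

namespace MvPolynomial

variable {σ R : Type*} [CommRing R]

/-- The coefficient at an integer exponent vector; it is `0` unless every exponent is
nonnegative (and only finitely many are nonzero). -/
noncomputable def coeffInt (p : MvPolynomial σ R) : (σ → ℤ) → R :=
  Function.extend (fun m : σ →₀ ℕ => fun i => (m i : ℤ)) (coeff · p) 0

theorem natCast_finsupp_injective :
    Function.Injective (fun m : σ →₀ ℕ => fun i => (m i : ℤ)) :=
  fun _ _ h => Finsupp.ext fun i => by simpa using congrFun h i

theorem coeffInt_natCast (p : MvPolynomial σ R) (m : σ →₀ ℕ) :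
    p.coeffInt (fun i => m i) = coeff m p :=
  natCast_finsupp_injective.extend_apply _ _ m

theorem coeffInt_of_not_exists (p : MvPolynomial σ R) {e : σ → ℤ}
    (he : ¬∃ m : σ →₀ ℕ, (fun i => (m i : ℤ)) = e) : p.coeffInt e = 0 :=
  Function.extend_apply' _ _ _ he

theorem coeffInt_of_neg (p : MvPolynomial σ R) {e : σ → ℤ} {i : σ} (hi : e i < 0) :
    p.coeffInt e = 0 :=
  coeffInt_of_not_exists p fun ⟨m, hm⟩ => by have := congrFun hm i; omega

theorem coeffInt_add (p q : MvPolynomial σ R) (e : σ → ℤ) :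
    (p + q).coeffInt e = p.coeffInt e + q.coeffInt e := by
  by_cases he : ∃ m : σ →₀ ℕ, (fun i => (m i : ℤ)) = e
  · obtain ⟨m, rfl⟩ := he
    simp only [coeffInt_natCast, coeff_add]
  · simp only [coeffInt_of_not_exists _ he, add_zero]

theorem coeffInt_sub (p q : MvPolynomial σ R) (e : σ → ℤ) :
    (p - q).coeffInt e = p.coeffInt e - q.coeffInt e := by
  by_cases he : ∃ m : σ →₀ ℕ, (fun i => (m i : ℤ)) = e
  · obtain ⟨m, rfl⟩ := he
    simp only [coeffInt_natCast, coeff_sub]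
  · simp only [coeffInt_of_not_exists _ he, sub_zero]

theorem coeffInt_zero (e : σ → ℤ) : (0 : MvPolynomial σ R).coeffInt e = 0 := by
  simpa using coeffInt_sub (0 : MvPolynomial σ R) 0 e

theorem coeffInt_C_mul (r : R) (p : MvPolynomial σ R) (e : σ → ℤ) :
    (C r * p).coeffInt e = r * p.coeffInt e := by
  by_cases he : ∃ m : σ →₀ ℕ, (fun i => (m i : ℤ)) = e
  · obtain ⟨m, rfl⟩ := he
    simp only [coeffInt_natCast, coeff_C_mul]
  · simp only [coeffInt_of_not_exists _ he, mul_zero]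

theorem exists_coeff_ne_zero_degree_eq_totalDegree {p : MvPolynomial σ R} (hp : p ≠ 0) :
    ∃ m, coeff m p ≠ 0 ∧ m.degree = p.totalDegree := by
  obtain ⟨m, hm, hdeg⟩ := Finset.exists_mem_eq_sup p.support (support_nonempty.mpr hp)
    fun m : σ →₀ ℕ => m.degree
  exact ⟨m, mem_support_iff.mp hm, hdeg.symm⟩

theorem coeffInt_eq_zero_of_totalDegree_lt [Fintype σ] (p : MvPolynomial σ R) {e : σ → ℤ}
    (he : p.totalDegree < ∑ i, e i) : p.coeffInt e = 0 := by
  by_cases hm : ∃ m : σ →₀ ℕ, (fun i => (m i : ℤ)) = e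
  · obtain ⟨m, rfl⟩ := hm
    rw [coeffInt_natCast]
    apply coeff_eq_zero_of_totalDegree_lt
    rw [← Finsupp.degree_apply, Finsupp.degree_eq_sum]
    simp only at he
    exact_mod_cast he
  · exact coeffInt_of_not_exists p hm

variable [DecidableEq σ]

theorem coeffInt_X_mul (i : σ) (p : MvPolynomial σ R) (e : σ → ℤ) :
    (X i * p).coeffInt e = p.coeffInt (Function.update e i (e i - 1)) := by
  by_cases he : ∃ m : σ →₀ ℕ, (fun i => (m i : ℤ)) = e
  · obtain ⟨m, rfl⟩ := he
    rw [coeffInt_natCast, coeff_X_mul']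
    split_ifs with hi
    · rw [Finsupp.mem_support_iff] at hi
      convert (coeffInt_natCast p (m - Finsupp.single i 1)).symm using 2
      funext j
      rcases eq_or_ne j i with rfl | hj
      · simp only [Function.update_self, Finsupp.coe_tsub, Pi.sub_apply, Finsupp.single_eq_same]
        omega
      · simp [hj]
    · rw [Finsupp.notMem_support_iff] at hi
      exact (coeffInt_of_neg p (i := i) (by simp [hi])).symm
  · rw [coeffInt_of_not_exists _ he, coeffInt_of_not_exists]
    rintro ⟨m, hm⟩
    refine he ⟨m + Finsupp.single i 1, ?_⟩
    funext j
    have := congrFun hm j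
    rcases eq_or_ne j i with rfl | hj <;> simp_all

theorem coeffInt_pderiv (i : σ) (p : MvPolynomial σ R) (e : σ → ℤ) :
    (pderiv i p).coeffInt e
      = ((e i + 1 : ℤ) : R) * p.coeffInt (Function.update e i (e i + 1)) := by
  by_cases he : ∃ m : σ →₀ ℕ, (fun i => (m i : ℤ)) = e
  · obtain ⟨m, rfl⟩ := he
    rw [coeffInt_natCast, coeff_pderiv, mul_comm]
    convert congrArg (_ * ·) (coeffInt_natCast p (m + Finsupp.single i 1)).symm using 3
    · push_cast; rfl
    funext j
    rcases eq_or_ne j i with rfl | hj <;> simp [*]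
  · rw [coeffInt_of_not_exists _ he]
    rcases eq_or_ne (e i + 1) 0 with hi | hi
    · simp [hi]
    rw [coeffInt_of_not_exists, mul_zero]
    rintro ⟨m, hm⟩
    refine he ⟨m - Finsupp.single i 1, ?_⟩
    funext j
    have := congrFun hm j
    rcases eq_or_ne j i with rfl | hj
    · simp only [Function.update_self, Finsupp.coe_tsub, Pi.sub_apply, Finsupp.single_eq_same]
        at this ⊢
      omega
    · simp_all

end MvPolynomial

theorem update_vec3_zero (a b c x : ℤ) : Function.update ![a, b, c] 0 x = ![x, b, c] := by
  ext i; fin_cases i <;> rfl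

theorem update_vec3_one (a b c x : ℤ) : Function.update ![a, b, c] 1 x = ![a, x, c] := by
  ext i; fin_cases i <;> rfl

theorem update_vec3_two (a b c x : ℤ) : Function.update ![a, b, c] 2 x = ![a, b, x] := by
  ext i; fin_cases i <;> rfl

theorem eq_zero_of_recurrence {T : ℕ} {a Δ : ℝ} {p q r V : ℕ → ℝ} (ha : a ≠ 0)
    (hp : ∀ t, 0 < p t) (hq : ∀ t < T, 0 ≤ q t) (hr : ∀ t ≤ T, 0 < r t)
    (h0 : p 0 * V 0 = r 0 * Δ)
    (hsucc : ∀ t < T, p (t + 1) * V (t + 1) = a * q t * V t + a ^ (t + 1) * r (t + 1) * Δ)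
    (hT : V T = 0) : Δ = 0 := by
  by_contra hΔ
  have hpos : ∀ t ≤ T, 0 < a ^ t * V t * Δ := by
    intro t ht
    induction t with
    | zero =>
      have := hr 0 ht
      refine pos_of_mul_pos_right ?_ (hp 0).le
      calc 0 < r 0 * Δ ^ 2 := by positivity
        _ = p 0 * (a ^ 0 * V 0 * Δ) := by linear_combination -Δ * h0
    | succ t ih =>
      have := ih (by omega)
      have := hq t (by omega)
      have := hr (t + 1) ht
      refine pos_of_mul_pos_right ?_ (hp (t + 1)).le
      calc 0 < a ^ 2 * q t * (a ^ t * V t * Δ) + r (t + 1) * (a ^ (t + 1) * Δ) ^ 2 := by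
            positivity
        _ = p (t + 1) * (a ^ (t + 1) * V (t + 1) * Δ) := by
            linear_combination -(a ^ (t + 1) * Δ) * hsucc t (by omega)
  simpa [hT] using hpos T le_rfl

/-- `H a b c` is the coefficient of `x^a y^b z^c` in a polynomial of degree at most `n` (zero at
negative exponents), and `relation a b c` says that the coefficient of `x^a y^b z^c` in `X h`
vanishes. -/
structure FirstIntegralCoeffs (α β κ lam : ℝ) (n : ℤ) (H : ℤ → ℤ → ℤ → ℝ) : Prop where
  eq_zero_of_neg : ∀ a b c : ℤ, a < 0 ∨ b < 0 ∨ c < 0 → H a b c = 0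
  eq_zero_of_lt : ∀ a b c : ℤ, n < a + b + c → H a b c = 0
  relation : ∀ a b c : ℤ,
    a * H a (b - 1) c - a * H a b c - β * (a + 1) * H (a + 1) b (c - 1)
      + α * (b + 1) * H a (b + 1) c - α * (b + 1) * H (a - 2) (b + 1) c - κ * b * H a b c
      + (c + 1) * H (a - 1) b (c + 1) - lam * c * H a b c = 0

namespace FirstIntegralCoeffs

variable {α β κ lam : ℝ} {n : ℤ} {H : ℤ → ℤ → ℤ → ℝ}

theorem top_recurrence (S : FirstIntegralCoeffs α β κ lam n H) {a b c : ℤ}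
    (hs : a + b + c = n) :
    a * H a b c = α * (b + 2) * H (a - 2) (b + 2) c := by
  have E := S.relation a (b + 1) c
  rw [S.eq_zero_of_lt a (b + 1) c (by omega), S.eq_zero_of_lt (a + 1) (b + 1) (c - 1) (by omega),
    S.eq_zero_of_lt a (b + 1 + 1) c (by omega), S.eq_zero_of_lt (a - 1) (b + 1) (c + 1) (by omega),
    show b + 1 - 1 = b by ring, show b + 1 + 1 = b + 2 by ring] at E
  push_cast at E
  linear_combination E

theorem eq_zero_of_sub_two (S : FirstIntegralCoeffs α β κ lam n H)
    {a b c : ℤ} (hs : a + b + c = n) (ha : a ≠ 0)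
    (h : H (a - 2) (b + 2) c = 0) : H a b c = 0 := by
  have := S.top_recurrence hs
  rw [h, mul_zero] at this
  exact (mul_eq_zero.mp this).resolve_left (by exact_mod_cast ha)

theorem eq_zero_of_add_two (S : FirstIntegralCoeffs α β κ lam n H)
    (hα : α ≠ 0) {a b c : ℤ} (hs : a + b + c = n) (hb : b ≠ 0)
    (h : H (a + 2) (b - 2) c = 0) : H a b c = 0 := by
  have := S.top_recurrence (a := a + 2) (b := b - 2) (c := c) (by omega)
  rw [h, mul_zero, add_sub_cancel_right, sub_add_cancel, eq_comm] at this
  exact (mul_eq_zero.mp this).resolve_left (mul_ne_zero hα (by simpa using hb))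

theorem eq_zero_of_odd_fst (S : FirstIntegralCoeffs α β κ lam n H)
    {a b c : ℤ} (hs : a + b + c = n) (ha : Odd a) : H a b c = 0 := by
  obtain ⟨k, rfl⟩ := ha
  induction k using Int.induction_on generalizing b c with
  | zero => exact S.eq_zero_of_sub_two hs (by omega) (S.eq_zero_of_neg _ _ _ (by omega))
  | succ k ih =>
    refine S.eq_zero_of_sub_two hs (by omega) ?_
    rw [show 2 * ((k : ℤ) + 1) + 1 - 2 = 2 * k + 1 by ring]
    exact ih (by omega)
  | pred k _ => exact S.eq_zero_of_neg _ _ _ (by omega)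

theorem eq_zero_of_odd_snd (S : FirstIntegralCoeffs α β κ lam n H)
    (hα : α ≠ 0) {a b c : ℤ} (hs : a + b + c = n) (hb : Odd b) :
    H a b c = 0 := by
  obtain ⟨k, rfl⟩ := hb
  induction k using Int.induction_on generalizing a c with
  | zero => exact S.eq_zero_of_add_two hα hs (by omega) (S.eq_zero_of_neg _ _ _ (by omega))
  | succ k ih =>
    refine S.eq_zero_of_add_two hα hs (by omega) ?_
    rw [show 2 * ((k : ℤ) + 1) + 1 - 2 = 2 * k + 1 by ring]
    exact ih (by omega)
  | pred k _ => exact S.eq_zero_of_neg _ _ _ (by omega)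

theorem eq_zero_of_column (S : FirstIntegralCoeffs α β κ lam n H)
    (hcol : ∀ s c, s + c = n → H 0 s c = 0) {a b c : ℤ}
    (hs : a + b + c = n) : H a b c = 0 := by
  rcases Int.even_or_odd a with ⟨k, rfl⟩ | ha
  · induction k using Int.induction_on generalizing b c with
    | zero => exact hcol b c (by omega)
    | succ k ih =>
      refine S.eq_zero_of_sub_two hs (by omega) ?_
      rw [show (k : ℤ) + 1 + (k + 1) - 2 = k + k by ring]
      exact ih (by omega)
    | pred k _ => exact S.eq_zero_of_neg _ _ _ (by omega)
  · exact S.eq_zero_of_odd_fst hs ha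

theorem top_eq_choose_mul (S : FirstIntegralCoeffs α β κ lam n H)
    (T k : ℕ) (hk : k ≤ T) {a b c s : ℤ} (hs : s + c = n) (hsT : s = 2 * T)
    (ha : a = 2 * k) (hab : a + b = s) : H a b c = α ^ k * T.choose k * H 0 s c := by
  induction k generalizing a b with
  | zero =>
    obtain rfl : a = 0 := by omega
    obtain rfl : b = s := by omega
    simp
  | succ k ih =>
    have hrec := S.top_recurrence (a := a) (b := b) (c := c) (by omega)
    rw [ih (by omega) (a := a - 2) (b := b + 2) (by omega) (by omega)] at hrec
    have hchoose : ((T.choose (k + 1) : ℕ) : ℝ) * (k + 1) = T.choose k * (T - k) := by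
      rw [← Nat.cast_sub (by omega)]
      exact_mod_cast Nat.choose_succ_right_eq T k
    have ha' : (a : ℝ) = 2 * k + 2 := by rw [ha]; push_cast; ring
    have hb' : (b : ℝ) = 2 * T - 2 * k - 2 := by
      rw [show b = 2 * T - 2 * k - 2 by omega]; push_cast; ring
    refine mul_left_cancel₀ (show (a : ℝ) ≠ 0 by rw [ha']; positivity) ?_
    rw [hrec, ha', hb']
    linear_combination (-2 * α ^ (k + 1) * H 0 s c) * hchoose

theorem column_mul_eq_zero (S : FirstIntegralCoeffs α β κ lam n H)
    {b c : ℤ} (hs : b + c = n) : (κ * b + lam * c) * H 0 b c = 0 := by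
  have E := S.relation 0 b c
  rw [S.eq_zero_of_odd_fst (a := 0 + 1) (b := b) (c := c - 1) (by omega) odd_one,
    S.eq_zero_of_lt 0 (b + 1) c (by omega), S.eq_zero_of_neg (0 - 2) (b + 1) c (by omega),
    S.eq_zero_of_neg (0 - 1) b (c + 1) (by omega)] at E
  push_cast at E
  linear_combination -E

theorem subtop_recurrence (S : FirstIntegralCoeffs α β κ lam n H)
    {a b c : ℤ} (hs : a + b + c = n) (ha : Odd a) :
    a * H a (b - 1) c - α * (b + 1) * H (a - 2) (b + 1) c - β * (a + 1) * H (a + 1) b (c - 1)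
      + (c + 1) * H (a - 1) b (c + 1) = 0 := by
  have E := S.relation a b c
  rw [S.eq_zero_of_odd_fst hs ha, S.eq_zero_of_lt a (b + 1) c (by omega)] at E
  linear_combination E

theorem subtop_one_eq (S : FirstIntegralCoeffs α β κ lam n H)
    (T : ℕ) {c : ℤ} (hs : 2 * T + 1 + c = n) :
    H 1 (2 * T - 1) c
      = α * β * (2 * T + 2) * H 0 (2 * T + 2) (c - 1) - (c + 1) * H 0 (2 * T) (c + 1) := by
  have E := S.subtop_recurrence (a := 1) (b := 2 * T) (c := c) (by omega) odd_one
  rw [S.eq_zero_of_neg (1 - 2) _ _ (by omega),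
    S.top_eq_choose_mul (T + 1) 1 (by omega) (a := 1 + 1) (b := 2 * T) (c := c - 1)
      (s := 2 * T + 2) (by omega) (by omega) (by omega) (by omega), sub_self,
    Nat.choose_one_right] at E
  push_cast at E
  linear_combination E

theorem subtop_succ_eq (S : FirstIntegralCoeffs α β κ lam n H)
    (T t : ℕ) (ht : t < T) {c : ℤ} (hs : 2 * T + 1 + c = n) :
    (2 * (t + 1) + 1) * H (2 * (t + 1) + 1) (2 * T - 2 * (t + 1) - 1) c
      = α * (2 * T - 2 * t - 1) * H (2 * t + 1) (2 * T - 2 * t - 1) c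
        + α ^ (t + 1) * T.choose (t + 1)
          * (α * β * (2 * T + 2) * H 0 (2 * T + 2) (c - 1) - (c + 1) * H 0 (2 * T) (c + 1)) := by
  have E := S.subtop_recurrence (a := 2 * t + 3) (b := 2 * T - 2 * t - 2) (c := c) (by omega)
    ⟨t + 1, by ring⟩
  rw [S.top_eq_choose_mul (T + 1) (t + 2) (by omega) (a := 2 * t + 3 + 1)
      (b := 2 * T - 2 * t - 2) (c := c - 1) (s := 2 * T + 2) (by omega) (by omega) (by omega)
      (by omega),
    S.top_eq_choose_mul T (t + 1) (by omega) (a := 2 * t + 3 - 1) (b := 2 * T - 2 * t - 2)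
      (c := c + 1) (s := 2 * T) (by omega) (by omega) (by omega) (by omega),
    show 2 * (t : ℤ) + 3 - 2 = 2 * t + 1 by ring,
    show 2 * (T : ℤ) - 2 * t - 2 + 1 = 2 * T - 2 * t - 1 by ring,
    show 2 * (T : ℤ) - 2 * t - 2 - 1 = 2 * T - 2 * (t + 1) - 1 by ring,
    show 2 * (t : ℤ) + 3 = 2 * (t + 1) + 1 by ring] at E
  have hchoose :
      ((T + 1 : ℕ) : ℝ) * T.choose (t + 1) = (T + 1).choose (t + 2) * (t + 2 : ℕ) := by
    exact_mod_cast Nat.add_one_mul_choose_eq T (t + 1)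
  push_cast at E hchoose
  linear_combination E - 2 * β * α ^ (t + 2) * H 0 (2 * T + 2) (c - 1) * hchoose

theorem column_recurrence (S : FirstIntegralCoeffs α β κ lam n H)
    (hα : α ≠ 0) (T : ℕ) {c : ℤ} (hs : 2 * T + 1 + c = n) :
    α * β * (2 * T + 2) * H 0 (2 * T + 2) (c - 1) = (c + 1) * H 0 (2 * T) (c + 1) := by
  refine sub_eq_zero.mp (eq_zero_of_recurrence (T := T) (a := α) (p := fun t => 2 * t + 1)
    (q := fun t => 2 * T - 2 * t - 1) (r := fun t => T.choose t)
    (V := fun t => H (2 * t + 1) (2 * T - 2 * t - 1) c) hα (fun t => by positivity) ?_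
    (fun t ht => by exact_mod_cast Nat.choose_pos ht) ?_ ?_ ?_)
  · intro t ht
    have : (t : ℝ) + 1 ≤ T := by exact_mod_cast ht
    linarith
  · simpa using S.subtop_one_eq T hs
  · intro t ht
    simpa using S.subtop_succ_eq T t ht hs
  · exact S.eq_zero_of_neg _ _ _ (by omega)

theorem column_two_eq_zero (S : FirstIntegralCoeffs α β κ lam n H)
    (hα : α ≠ 0) (hκ : κ = 0) (hlam : lam = 0) : H 0 2 (n - 2) = 0 := by
  have h11 : H 1 1 (n - 3) = 0 := by
    have := S.subtop_one_eq 1 (c := n - 3) (by omega)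
    rw [S.column_recurrence hα 1 (by omega), sub_self] at this
    simpa using this
  have E := S.relation 0 1 (n - 2)
  rw [S.eq_zero_of_neg (0 - 2) _ _ (by omega), S.eq_zero_of_neg (0 - 1) _ _ (by omega),
    show n - 2 - 1 = n - 3 by ring, zero_add, h11, hκ, hlam] at E
  have : α * 2 * H 0 2 (n - 2) = 0 := by push_cast at E; linear_combination E
  simpa [hα] using this

theorem column_zero_eq_zero (S : FirstIntegralCoeffs α β κ lam n H)
    (hα : α ≠ 0) (hn : n ≠ 0) : H 0 0 n = 0 := by
  by_contra h0
  have hstep : α * β * 2 * H 0 2 (n - 2) = n * H 0 0 n := by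
    simpa [sub_sub, one_add_one_eq_two] using S.column_recurrence hα 0 (c := n - 1) (by omega)
  have h2 : H 0 2 (n - 2) ≠ 0 := fun h2 => by
    rw [h2, mul_zero, eq_comm] at hstep
    exact h0 ((mul_eq_zero.mp hstep).resolve_left (by exact_mod_cast hn))
  have hlam : lam = 0 := by
    have := S.column_mul_eq_zero (b := 0) (c := n) (by omega)
    simpa [h0, hn] using this
  have hκ : κ = 0 := by
    have := S.column_mul_eq_zero (b := 2) (c := n - 2) (by omega)
    simpa [h2, hlam] using this
  exact h2 (S.column_two_eq_zero hα hκ hlam)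

theorem column_eq_zero_of_beta_ne_zero (S : FirstIntegralCoeffs α β κ lam n H)
    (hα : α ≠ 0) (hβ : β ≠ 0) (hn : n ≠ 0) (T : ℕ) :
    H 0 (2 * T) (n - 2 * T) = 0 := by
  induction T with
  | zero => simpa using S.column_zero_eq_zero hα hn
  | succ T ih =>
    have hstep := S.column_recurrence hα T (c := n - 2 * T - 1) (by omega)
    rw [show n - 2 * T - 1 + 1 = n - 2 * T by ring, ih, mul_zero] at hstep
    have hne : α * β * (2 * T + 2) ≠ 0 := by positivity
    convert (mul_eq_zero.mp hstep).resolve_left hne using 2 <;> push_cast <;> ring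

theorem column_eq_zero_of_beta_eq_zero (S : FirstIntegralCoeffs α β κ lam n H)
    (hα : α ≠ 0) (hβ : β = 0) (hκ : κ ≠ 0) (hn : n ≠ 0)
    (T : ℕ) {c : ℤ} (hs : 2 * T + c = n) : H 0 (2 * T) c = 0 := by
  rcases eq_or_ne c 0 with rfl | hc
  · have := S.column_mul_eq_zero (b := 2 * T) (c := 0) (by omega)
    simp only [Int.cast_zero, mul_zero, add_zero] at this
    refine (mul_eq_zero.mp this).resolve_left (mul_ne_zero hκ ?_)
    exact_mod_cast (show (2 * T : ℤ) ≠ 0 by omega)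
  · have hstep := S.column_recurrence hα T (c := c - 1) (by omega)
    rw [hβ, mul_zero, zero_mul, zero_mul, eq_comm, Int.cast_sub, Int.cast_one, sub_add_cancel,
      sub_add_cancel] at hstep
    exact (mul_eq_zero.mp hstep).resolve_left (by exact_mod_cast hc)

theorem column_eq_zero (S : FirstIntegralCoeffs α β κ lam n H)
    (hα : α ≠ 0) (hβκ : β ≠ 0 ∨ κ ≠ 0) (hn : n ≠ 0) {s c : ℤ}
    (hs : s + c = n) : H 0 s c = 0 := by
  rcases Int.even_or_odd s with ⟨T, rfl⟩ | hodd
  · rcases lt_or_ge T 0 with hT | hT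
    · exact S.eq_zero_of_neg _ _ _ (by omega)
    lift T to ℕ using hT
    rw [← two_mul]
    by_cases hβ : β = 0
    · exact S.column_eq_zero_of_beta_eq_zero hα hβ (hβκ.resolve_left (not_not.mpr hβ)) hn T
        (by omega)
    · obtain rfl : c = n - 2 * T := by omega
      exact S.column_eq_zero_of_beta_ne_zero hα hβ hn T
  · exact S.eq_zero_of_odd_snd hα (a := 0) (by omega) hodd

theorem eq_zero_of_sum_eq (S : FirstIntegralCoeffs α β κ lam n H)
    (hα : α ≠ 0) (hβκ : β ≠ 0 ∨ κ ≠ 0) (hn : n ≠ 0) {a b c : ℤ}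
    (hs : a + b + c = n) : H a b c = 0 :=
  S.eq_zero_of_column (fun _ _ => S.column_eq_zero hα hβκ hn) hs

end FirstIntegralCoeffs

theorem firstIntegralCoeffs_coeffInt {α β κ lam : ℝ} {h : MvPolynomial (Fin 3) ℝ}
    (hint : (X 0 * (X 1 - 1) - C β * X 2) * pderiv 0 h
      + (C α * (1 - X 0 ^ 2) - C κ * X 1) * pderiv 1 h
      + (X 0 - C lam * X 2) * pderiv 2 h = 0) :
    FirstIntegralCoeffs α β κ lam h.totalDegree (fun a b c => h.coeffInt ![a, b, c]) where
  eq_zero_of_neg a b c := by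
    rintro (ha | hb | hc)
    exacts [h.coeffInt_of_neg (i := 0) ha, h.coeffInt_of_neg (i := 1) hb,
      h.coeffInt_of_neg (i := 2) hc]
  eq_zero_of_lt a b c habc := h.coeffInt_eq_zero_of_totalDegree_lt (by simpa [Fin.sum_univ_three])
  relation a b c := by
    have E := congrArg (coeffInt · ![a, b, c]) hint
    rw [show (X 0 * (X 1 - 1) - C β * X 2) * pderiv 0 h
        + (C α * (1 - X 0 ^ 2) - C κ * X 1) * pderiv 1 h + (X 0 - C lam * X 2) * pderiv 2 h
      = X 0 * (X 1 * pderiv 0 h) - X 0 * pderiv 0 h - C β * (X 2 * pderiv 0 h)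
        + C α * pderiv 1 h - C α * (X 0 * (X 0 * pderiv 1 h)) - C κ * (X 1 * pderiv 1 h)
        + X 0 * pderiv 2 h - C lam * (X 2 * pderiv 2 h) by ring] at E
    simp only [coeffInt_add, coeffInt_sub, coeffInt_C_mul, coeffInt_X_mul, coeffInt_pderiv,
      coeffInt_zero, update_vec3_zero, update_vec3_one, update_vec3_two, Matrix.cons_val_zero,
      Matrix.cons_val_one, Matrix.cons_val_two, Matrix.head_cons, Matrix.tail_cons,
      sub_add_cancel, sub_sub, one_add_one_eq_two] at E
    push_cast at E
    linear_combination E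

/-- With α ≠ 0 and (αβ ≠ 0 or ακ ≠ 0), the HSA dynamo admits no
polynomial first integral: every polynomial h with X h = 0 is constant. -/
theorem stmt_6 (α β κ lam : ℝ) (hα : α ≠ 0) (h' : α * β ≠ 0 ∨ α * κ ≠ 0)
    (h : MvPolynomial (Fin 3) ℝ)
    (hint : (X 0 * (X 1 - 1) - C β * X 2) * pderiv 0 h
      + (C α * (1 - X 0 ^ 2) - C κ * X 1) * pderiv 1 h
      + (X 0 - C lam * X 2) * pderiv 2 h = 0) :
    ∃ c : ℝ, h = C c := by
  by_contra hconst
  have hdeg : h.totalDegree ≠ 0 := fun h0 => hconst ⟨_, totalDegree_eq_zero_iff_eq_C.mp h0⟩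
  obtain ⟨m, hm, hmdeg⟩ := exists_coeff_ne_zero_degree_eq_totalDegree (p := h)
    (by rintro rfl; exact hdeg totalDegree_zero)
  have htop := (firstIntegralCoeffs_coeffInt hint).eq_zero_of_sum_eq hα
    (h'.imp right_ne_zero_of_mul right_ne_zero_of_mul) (by exact_mod_cast hdeg)
    (a := m 0) (b := m 1) (c := m 2)
    (by rw [← hmdeg, Finsupp.degree_eq_sum, Fin.sum_univ_three]; push_cast; ring)
  rw [show ![(m 0 : ℤ), m 1, m 2] = fun i => (m i : ℤ) by ext i; fin_cases i <;> rfl,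
    coeffInt_natCast] at htop
  exact hm htop
end

section
/- Any polynomial g ∈ ℝ[x,y,z] of degree n ≥ 3 satisfying (x(y-1) - βz)∂g/∂x + (α(1-x²) - κy)∂g/∂y + (x - λz)∂g/∂z = β₀ + β₁x + β₂y + β₃z (with α ≠ 0 and β₀,…,β₃ ∈ ℝ) does not exist; equivalently, every polynomial solution g of this equation has degree at most 2. -/
/-!
Write `t a b c` for the coefficient of `x^a y^b z^c` in `g`, extended by zero to `ℤ³`. Comparing
coefficients of degree at least 2 in `X g = β₀ + β₁x + β₂y + β₃z` gives a linear recurrence for `t`.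

Group monomials by the weight `a + b`. Once all coefficients of weight above `W` and total degree
above 2 vanish, the recurrence on the slice `e(c) = (t a (W - a) c)ₐ` reads
`(c + 1) e(c + 1) = J e(c)`, where `J` is the matrix of the derivation `α x ∂_y - y ∂_x` on binary
forms of degree `W`. As `e(c)` vanishes for large `c`, descending in `c` puts `e(c)` in
`ker J ∩ im J`, which is zero: for odd `W` already `ker J = 0`, and for even `W` the kernel is
spanned by a vector `v` while `J` has a left null vector `u` with `u ⬝ v > 0`. For even `W ≥ 4` the
leftover `e(0) ∈ ker J` is determined by the coefficient of `y^W`, which the recurrence at `y^W` and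
`y^(W-1)` forces to vanish. Descending in `W` leaves no coefficient of total degree above 2.
-/

open MvPolynomial Finset Function

noncomputable section

theorem Int.forall_of_forall_gt_of_succ {P : ℤ → Prop} (D : ℤ) (htop : ∀ n, D < n → P n)
    (hstep : ∀ n, P (n + 1) → P n) : ∀ n, P n := by
  intro n
  rcases lt_or_ge D n with h | h
  · exact htop n h
  refine Int.leInductionDown (m := D + 1) (motive := fun n _ => P n) (htop _ (by omega))
    (fun k _ hk => hstep (k - 1) (by simpa using hk)) n (by omega)

theorem exists_finsupp_eq_natCast_of_nonneg {σ : Type*} [Finite σ] {m : σ → ℤ} (hm : 0 ≤ m) :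
    ∃ n : σ →₀ ℕ, m = fun i => (n i : ℤ) :=
  ⟨Finsupp.equivFunOnFinite.symm fun i => (m i).toNat, by ext i; simpa using hm i⟩

theorem vec3_update_zero {α : Type*} (a b c d : α) : update ![a, b, c] 0 d = ![d, b, c] := by
  ext i; fin_cases i <;> rfl

theorem vec3_update_one {α : Type*} (a b c d : α) : update ![a, b, c] 1 d = ![a, d, c] := by
  ext i; fin_cases i <;> rfl

theorem vec3_update_two {α : Type*} (a b c d : α) : update ![a, b, c] 2 d = ![a, b, d] := by
  ext i; fin_cases i <;> rfl

namespace MvPolynomial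

variable {σ R : Type*} [Finite σ]

section CommSemiring
variable [CommSemiring R]

open scoped Classical in
def intCoeff (m : σ → ℤ) (p : MvPolynomial σ R) : R :=
  if 0 ≤ m then coeff (Finsupp.equivFunOnFinite.symm fun i => (m i).toNat) p else 0

theorem intCoeff_natCast (n : σ →₀ ℕ) (p : MvPolynomial σ R) :
    intCoeff (fun i => (n i : ℤ)) p = coeff n p := by
  rw [intCoeff, if_pos (Pi.le_def.mpr fun i => by simp)]
  congr
  ext i
  simp

theorem intCoeff_of_neg {m : σ → ℤ} {i : σ} (hi : m i < 0) (p : MvPolynomial σ R) :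
    intCoeff m p = 0 :=
  if_neg fun h => (h i).not_gt hi

@[simp]
theorem intCoeff_add (m : σ → ℤ) (p q : MvPolynomial σ R) :
    intCoeff m (p + q) = intCoeff m p + intCoeff m q := by
  unfold intCoeff; split_ifs <;> simp

@[simp]
theorem intCoeff_C_mul (m : σ → ℤ) (r : R) (p : MvPolynomial σ R) :
    intCoeff m (C r * p) = r * intCoeff m p := by
  unfold intCoeff; split_ifs <;> simp

theorem intCoeff_X_mul [DecidableEq σ] (i : σ) (m : σ → ℤ) (p : MvPolynomial σ R) :
    intCoeff m (X i * p) = intCoeff (update m i (m i - 1)) p := by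
  by_cases hm : 0 ≤ m
  · obtain ⟨n, rfl⟩ := exists_finsupp_eq_natCast_of_nonneg hm
    rw [intCoeff_natCast, coeff_X_mul']
    split_ifs with hi
    · rw [← intCoeff_natCast]
      congr
      ext j
      rcases eq_or_ne j i with rfl | hj
      · simp [Finsupp.mem_support_iff] at hi; simp; omega
      · simp [hj]
    · rw [intCoeff_of_neg (i := i)]
      simp_all
  · obtain ⟨j, hj⟩ : ∃ j, m j < 0 := by simpa [Pi.le_def] using hm
    rw [intCoeff_of_neg hj, intCoeff_of_neg (i := j)]
    rcases eq_or_ne j i with rfl | hji <;> simp [*]; omega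

end CommSemiring

section CommRing
variable [CommRing R]

@[simp]
theorem intCoeff_sub (m : σ → ℤ) (p q : MvPolynomial σ R) :
    intCoeff m (p - q) = intCoeff m p - intCoeff m q := by
  unfold intCoeff; split_ifs <;> simp

theorem intCoeff_pderiv [DecidableEq σ] (i : σ) (m : σ → ℤ) (p : MvPolynomial σ R) :
    intCoeff m (pderiv i p) = intCoeff (update m i (m i + 1)) p * ((m i + 1 : ℤ) : R) := by
  by_cases hm : 0 ≤ m
  · obtain ⟨n, rfl⟩ := exists_finsupp_eq_natCast_of_nonneg hm
    rw [intCoeff_natCast, coeff_pderiv, ← intCoeff_natCast]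
    push_cast
    congr
    ext j
    rcases eq_or_ne j i with rfl | hj <;> simp [*]
  · obtain ⟨j, hj⟩ : ∃ j, m j < 0 := by simpa [Pi.le_def] using hm
    rw [intCoeff_of_neg hj]
    rcases eq_or_ne j i with rfl | hji
    · rcases (by omega : m j = -1 ∨ m j < -1) with h | h
      · simp [h]
      · rw [intCoeff_of_neg (i := j) (by simp; omega), zero_mul]
    · rw [intCoeff_of_neg (i := j) (by simp [hji, hj]), zero_mul]

end CommRing

variable [Fintype σ] [CommSemiring R]

theorem intCoeff_eq_zero_of_totalDegree_lt {m : σ → ℤ} {p : MvPolynomial σ R}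
    (h : (p.totalDegree : ℤ) < ∑ i, m i) : intCoeff m p = 0 := by
  by_cases hm : 0 ≤ m
  · obtain ⟨n, rfl⟩ := exists_finsupp_eq_natCast_of_nonneg hm
    rw [intCoeff_natCast, ← notMem_support_iff]
    intro hn
    have := le_totalDegree hn
    rw [Finsupp.sum_fintype _ _ fun _ => rfl] at this
    zify at this
    simp only at h
    omega
  · obtain ⟨j, hj⟩ : ∃ j, m j < 0 := by simpa [Pi.le_def] using hm
    exact intCoeff_of_neg hj p

theorem totalDegree_le_of_intCoeff_eq_zero {p : MvPolynomial σ R} {d : ℕ}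
    (h : ∀ m : σ → ℤ, (d : ℤ) < ∑ i, m i → intCoeff m p = 0) : p.totalDegree ≤ d := by
  refine Finset.sup_le fun n hn => ?_
  rw [Finsupp.sum_fintype _ _ fun _ => rfl]
  by_contra hlt
  refine mem_support_iff.mp hn ?_
  rw [← intCoeff_natCast]
  exact h _ (by zify at hlt; omega)

end MvPolynomial

/-- Coefficients of `(α x ∂_y - y ∂_x) f` for the binary form `f = ∑ₐ e a • x^a y^(W - a)`. -/
def formDeriv (α : ℝ) (W : ℕ) (e : ℤ → ℝ) (a : ℤ) : ℝ :=
  α * (W + 1 - a) * e (a - 1) - (a + 1) * e (a + 1)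

def kerCoeff (α : ℝ) (W : ℕ) : ℕ → ℝ
  | 0 => 1
  | k + 1 => α * (W - 2 * k) / (2 * k + 2) * kerCoeff α W k

def cokerCoeff (α : ℝ) (W : ℕ) : ℕ → ℝ
  | 0 => 1
  | k + 1 => (2 * k + 1) / (α * (W - 2 * k - 1)) * cokerCoeff α W k

section FormDeriv

variable {α : ℝ} {W : ℕ} {e : ℤ → ℝ}

theorem apply_odd_eq_zero_of_formDeriv_eq_zero (he : ∀ a < 0, e a = 0)
    (hJ : formDeriv α W e = 0) (k : ℕ) : e (2 * k + 1) = 0 := by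
  induction k with
  | zero =>
    have h := congrFun hJ 0
    simp only [formDeriv, Pi.zero_apply, he (0 - 1) (by norm_num)] at h
    simpa using h
  | succ k ih =>
    have h := congrFun hJ (2 * k + 2)
    simp only [formDeriv, Pi.zero_apply, show (2 * k + 2 : ℤ) - 1 = 2 * k + 1 by ring, ih] at h
    push_cast at h ⊢
    rw [show (2 * (k : ℤ) + 2 + 1) = 2 * (k + 1) + 1 by ring] at h
    have h' : (2 * (k : ℝ) + 3) * e (2 * (k + 1) + 1) = 0 := by linear_combination -h
    exact (mul_eq_zero.mp h').resolve_left (by positivity)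

theorem apply_even_of_formDeriv_eq_zero (hJ : formDeriv α W e = 0) (k : ℕ) :
    e (2 * k) = e 0 * kerCoeff α W k := by
  induction k with
  | zero => simp [kerCoeff]
  | succ k ih =>
    have h := congrFun hJ (2 * k + 1)
    simp only [formDeriv, Pi.zero_apply, show (2 * k + 1 : ℤ) - 1 = 2 * k by ring, ih] at h
    push_cast
    rw [show (2 * ((k : ℤ) + 1)) = 2 * k + 1 + 1 by ring, kerCoeff]
    field_simp
    push_cast at h
    linear_combination -h

theorem eq_zero_of_formDeriv_eq_zero_of_apply_zero (he : ∀ a < 0, e a = 0)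
    (hJ : formDeriv α W e = 0) (h0 : e 0 = 0) : e = 0 := by
  funext a
  rcases lt_or_ge a 0 with ha | ha
  · exact he a ha
  obtain ⟨k, rfl⟩ := Int.eq_ofNat_of_zero_le ha
  obtain ⟨j, rfl | rfl⟩ := Nat.even_or_odd' k
  · simpa [h0] using apply_even_of_formDeriv_eq_zero hJ j
  · simpa using apply_odd_eq_zero_of_formDeriv_eq_zero he hJ j

theorem kerCoeff_ne_zero_of_odd (hα : α ≠ 0) (hW : Odd W) (k : ℕ) : kerCoeff α W k ≠ 0 := by
  induction k with
  | zero => simp [kerCoeff]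
  | succ k ih =>
    have hWk : (W : ℝ) - 2 * k ≠ 0 := by
      obtain ⟨N, rfl⟩ := hW
      intro h
      have : (2 * N + 1 : ℝ) = 2 * k := by push_cast at h; linarith
      norm_cast at this
      omega
    rw [kerCoeff]
    exact mul_ne_zero (div_ne_zero (mul_ne_zero hα hWk) (by positivity)) ih

theorem eq_zero_of_formDeriv_eq_zero_of_odd (hα : α ≠ 0) (hW : Odd W)
    (he : ∀ a ∉ Set.Icc 0 (W : ℤ), e a = 0) (hJ : formDeriv α W e = 0) : e = 0 := by
  have hneg : ∀ a < 0, e a = 0 := fun a ha => he a (by simp [ha])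
  refine eq_zero_of_formDeriv_eq_zero_of_apply_zero hneg hJ ?_
  obtain ⟨N, rfl⟩ := hW
  have htop := apply_even_of_formDeriv_eq_zero hJ (N + 1)
  rw [he _ (by simp; omega)] at htop
  exact (mul_eq_zero.mp htop.symm).resolve_right (kerCoeff_ne_zero_of_odd hα ⟨N, rfl⟩ _)

theorem mul_cokerCoeff_succ (hα : α ≠ 0) (N k : ℕ) :
    α * (2 * N - 2 * k - 1) * cokerCoeff α (2 * N) (k + 1)
      = (2 * k + 1) * cokerCoeff α (2 * N) k := by
  have hNk : (2 * N - 2 * k - 1 : ℝ) ≠ 0 := by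
    intro h
    have : (2 * N : ℝ) = 2 * k + 1 := by linarith
    norm_cast at this
    omega
  rw [cokerCoeff]
  push_cast
  rw [← mul_assoc, mul_div_assoc', mul_comm _ (2 * (k : ℝ) + 1), mul_div_assoc,
    div_self (mul_ne_zero hα hNk), mul_one]

theorem sum_cokerCoeff_mul_formDeriv (hα : α ≠ 0) (N : ℕ) {w : ℤ → ℝ}
    (hw : ∀ a ∉ Set.Icc 0 (2 * N : ℤ), w a = 0) :
    ∑ k ∈ range (N + 1), cokerCoeff α (2 * N) k * formDeriv α (2 * N) w (2 * k) = 0 := by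
  set F : ℕ → ℝ := fun k => cokerCoeff α (2 * N) k * (α * (2 * N + 1 - 2 * k)) * w (2 * k - 1)
  have hterm : ∀ k, cokerCoeff α (2 * N) k * formDeriv α (2 * N) w (2 * k) = F k - F (k + 1) := by
    intro k
    have := mul_cokerCoeff_succ hα N k
    simp only [F, formDeriv]
    push_cast
    rw [show (2 * ((k : ℤ) + 1) - 1) = 2 * k + 1 by ring]
    linear_combination w (2 * k + 1) * this
  rw [sum_congr rfl fun k _ => hterm k, sum_range_sub']
  simp only [F, hw (2 * (0 : ℕ) - 1) (by simp), hw (2 * (N + 1 : ℕ) - 1) (by simp; omega),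
    mul_zero, sub_zero]

theorem cokerCoeff_mul_kerCoeff_pos (hα : α ≠ 0) {N k : ℕ} (hk : k ≤ N) :
    0 < cokerCoeff α (2 * N) k * kerCoeff α (2 * N) k := by
  induction k with
  | zero => simp [cokerCoeff, kerCoeff]
  | succ k ih =>
    have hNk : (0 : ℝ) < 2 * N - 2 * k - 1 := by
      have : (2 * k + 2 : ℝ) ≤ 2 * N := by exact_mod_cast (by omega : 2 * k + 2 ≤ 2 * N)
      linarith
    have hfactor : cokerCoeff α (2 * N) (k + 1) * kerCoeff α (2 * N) (k + 1)
        = (2 * k + 1) * (2 * N - 2 * k) / ((2 * N - 2 * k - 1) * (2 * k + 2))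
          * (cokerCoeff α (2 * N) k * kerCoeff α (2 * N) k) := by
      rw [cokerCoeff, kerCoeff]
      push_cast
      field_simp
    rw [hfactor]
    exact mul_pos (div_pos (by nlinarith) (by positivity)) (ih (by omega))

theorem eq_zero_of_formDeriv_eq_zero_of_mul_eq_formDeriv (hα : α ≠ 0) {N : ℕ} {w : ℤ → ℝ}
    (he : ∀ a ∉ Set.Icc 0 (2 * N : ℤ), e a = 0) (hw : ∀ a ∉ Set.Icc 0 (2 * N : ℤ), w a = 0)
    (hJ : formDeriv α (2 * N) e = 0) {r : ℝ} (hr : r ≠ 0)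
    (hew : ∀ a, r * e a = formDeriv α (2 * N) w a) : e = 0 := by
  refine eq_zero_of_formDeriv_eq_zero_of_apply_zero (fun a ha => he a (by simp [ha])) hJ ?_
  have hsum := sum_cokerCoeff_mul_formDeriv hα N hw
  simp only [← hew, apply_even_of_formDeriv_eq_zero hJ] at hsum
  have hpos : 0 < ∑ k ∈ range (N + 1), cokerCoeff α (2 * N) k * kerCoeff α (2 * N) k :=
    sum_pos (fun k hk => cokerCoeff_mul_kerCoeff_pos hα (by simpa [Nat.lt_succ_iff] using hk))
      nonempty_range_add_one
  have : r * e 0 * ∑ k ∈ range (N + 1), cokerCoeff α (2 * N) k * kerCoeff α (2 * N) k = 0 := by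
    rw [mul_sum, ← hsum]
    exact sum_congr rfl fun k _ => by ring
  simpa [hr, hpos.ne'] using this

end FormDeriv

def hsaField (α β κ lam : ℝ) (g : MvPolynomial (Fin 3) ℝ) : MvPolynomial (Fin 3) ℝ :=
  (X 0 * (X 1 - 1) - C β * X 2) * pderiv 0 g
    + (C α * (1 - X 0 ^ 2) - C κ * X 1) * pderiv 1 g + (X 0 - C lam * X 2) * pderiv 2 g

def hsaCoeff (α β κ lam : ℝ) (t : ℤ → ℤ → ℤ → ℝ) (a b c : ℤ) : ℝ :=
  a * t a (b - 1) c - (a + κ * b + lam * c) * t a b c - β * (a + 1) * t (a + 1) b (c - 1)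
    + α * (b + 1) * t a (b + 1) c - α * (b + 1) * t (a - 2) (b + 1) c
    + (c + 1) * t (a - 1) b (c + 1)

theorem intCoeff_hsaField (α β κ lam : ℝ) (g : MvPolynomial (Fin 3) ℝ) (a b c : ℤ) :
    intCoeff ![a, b, c] (hsaField α β κ lam g)
      = hsaCoeff α β κ lam (fun a b c => intCoeff ![a, b, c] g) a b c := by
  have hexpand : hsaField α β κ lam g = X 0 * (X 1 * pderiv 0 g) - X 0 * pderiv 0 g
      - C β * (X 2 * pderiv 0 g) + C α * pderiv 1 g - C α * (X 0 * (X 0 * pderiv 1 g))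
      - C κ * (X 1 * pderiv 1 g) + X 0 * pderiv 2 g - C lam * (X 2 * pderiv 2 g) := by
    rw [hsaField]; ring
  rw [hexpand, hsaCoeff]
  simp only [intCoeff_add, intCoeff_sub, intCoeff_C_mul, intCoeff_X_mul, intCoeff_pderiv,
    vec3_update_zero, vec3_update_one, vec3_update_two, Matrix.cons_val_zero, Matrix.cons_val_one,
    Matrix.cons_val_two, Matrix.head_cons, Matrix.tail_cons, sub_add_cancel, sub_sub,
    one_add_one_eq_two]
  push_cast
  ring

theorem totalDegree_affine_le (b₀ b₁ b₂ b₃ : ℝ) :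
    (C b₀ + C b₁ * X 0 + C b₂ * X 1 + C b₃ * X 2 : MvPolynomial (Fin 3) ℝ).totalDegree ≤ 1 := by
  refine (totalDegree_add _ _).trans (max_le ((totalDegree_add _ _).trans (max_le
    ((totalDegree_add _ _).trans (max_le ?_ ?_)) ?_)) ?_) <;>
  first | simp | exact (totalDegree_mul _ _).trans (by simp)

structure CoeffSolution (α β κ lam : ℝ) (t : ℤ → ℤ → ℤ → ℝ) : Prop where
  eq_zero_of_neg : ∀ a b c, a < 0 ∨ b < 0 ∨ c < 0 → t a b c = 0
  eventually_zero : ∃ D : ℤ, ∀ a b c, D < a + b + c → t a b c = 0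
  hsaCoeff_eq_zero : ∀ a b c, 2 ≤ a + b + c → hsaCoeff α β κ lam t a b c = 0

theorem coeffSolution_intCoeff {α β κ lam : ℝ} {g : MvPolynomial (Fin 3) ℝ}
    (hg : (hsaField α β κ lam g).totalDegree ≤ 1) :
    CoeffSolution α β κ lam fun a b c => intCoeff ![a, b, c] g where
  eq_zero_of_neg a b c h := by
    rcases h with h | h | h
    · exact intCoeff_of_neg (i := 0) h g
    · exact intCoeff_of_neg (i := 1) h g
    · exact intCoeff_of_neg (i := 2) h g
  eventually_zero := ⟨g.totalDegree, fun a b c h =>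
    intCoeff_eq_zero_of_totalDegree_lt (by simpa [Fin.sum_univ_three] using h)⟩
  hsaCoeff_eq_zero a b c h := by
    rw [← intCoeff_hsaField]
    exact intCoeff_eq_zero_of_totalDegree_lt (by simp [Fin.sum_univ_three]; omega)

def VanishesAbove (t : ℤ → ℤ → ℤ → ℝ) (W : ℤ) : Prop :=
  ∀ a b c, W < a + b → 2 < a + b + c → t a b c = 0

namespace CoeffSolution

variable {α β κ lam : ℝ} {t : ℤ → ℤ → ℤ → ℝ}

theorem slice_eq_zero_of_notMem (h : CoeffSolution α β κ lam t) (W : ℕ) (c : ℤ) :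
    ∀ a ∉ Set.Icc 0 (W : ℤ), t a (W - a) c = 0 := fun a ha =>
  h.eq_zero_of_neg _ _ _ (by simp only [Set.mem_Icc, not_and_or, not_le] at ha; omega)

theorem slice_rec (h : CoeffSolution α β κ lam t) {W : ℕ} (hW : VanishesAbove t W) {c : ℤ}
    (hc : 2 ≤ W + c) (a : ℤ) :
    (c + 1) * t a (W - a) (c + 1) = formDeriv α W (fun a => t a (W - a) c) a := by
  have hrec := h.hsaCoeff_eq_zero (a + 1) (W - a) c (by omega)
  rw [hsaCoeff, hW (a + 1) (W - a) c (by omega) (by omega),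
    hW (a + 1 + 1) (W - a) (c - 1) (by omega) (by omega),
    hW (a + 1) (W - a + 1) c (by omega) (by omega)] at hrec
  simp only [formDeriv]
  rw [show (W : ℤ) - a - 1 = W - (a + 1) by ring, show a + 1 - 2 = a - 1 by ring,
    show (W : ℤ) - a + 1 = W - (a - 1) by ring, show a + 1 - 1 = a by ring] at hrec
  push_cast at hrec
  linear_combination hrec

theorem slice_eq_zero_of_odd (h : CoeffSolution α β κ lam t) (hα : α ≠ 0) {W : ℕ} (hWodd : Odd W)
    (hW : VanishesAbove t W) : ∀ c : ℤ, 2 ≤ W + c → (fun a => t a (W - a) c) = 0 := by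
  obtain ⟨D, hD⟩ := h.eventually_zero
  refine Int.forall_of_forall_gt_of_succ D
    (fun c hc _ => funext fun a => hD _ _ _ (by omega)) fun c hnext hc => ?_
  refine eq_zero_of_formDeriv_eq_zero_of_odd hα hWodd (h.slice_eq_zero_of_notMem W c) ?_
  funext a
  rw [← h.slice_rec hW hc, congrFun (hnext (by omega)) a, Pi.zero_apply, mul_zero]

theorem slice_eq_zero_of_even (h : CoeffSolution α β κ lam t) (hα : α ≠ 0) {N : ℕ}
    (hW : VanishesAbove t (2 * N)) :
    ∀ c : ℤ, 1 ≤ c → 3 ≤ 2 * N + c → (fun a => t a (2 * N - a) c) = 0 := by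
  obtain ⟨D, hD⟩ := h.eventually_zero
  refine Int.forall_of_forall_gt_of_succ D
    (fun c hc _ _ => funext fun a => hD _ _ _ (by omega)) fun c hnext hc1 hc => ?_
  have hW' : VanishesAbove t ((2 * N : ℕ) : ℤ) := by exact_mod_cast hW
  refine eq_zero_of_formDeriv_eq_zero_of_mul_eq_formDeriv hα
    (h.slice_eq_zero_of_notMem (2 * N) c) (h.slice_eq_zero_of_notMem (2 * N) (c - 1)) ?_
    (r := c) (by positivity) fun a => ?_
  · funext a
    have := h.slice_rec hW' (c := c) (by omega) a
    push_cast at this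
    rw [← this, congrFun (hnext (by omega) (by omega)) a, Pi.zero_apply, mul_zero]
  · have := h.slice_rec hW' (c := c - 1) (by omega) a
    push_cast at this
    simpa using this

theorem coeff_y_pow_eq_zero (h : CoeffSolution α β κ lam t) (hα : α ≠ 0) {W : ℕ}
    (hW3 : 3 ≤ W) (hW : VanishesAbove t W) : t 0 W 0 = 0 := by
  have hneg := h.eq_zero_of_neg
  have h₁ := h.hsaCoeff_eq_zero 0 W 0 (by omega)
  have h₂ := h.hsaCoeff_eq_zero 0 (W - 1) 0 (by omega)
  rw [hsaCoeff, hW 0 (W + 1) 0 (by omega) (by omega), hneg (0 + 1) W (0 - 1) (by omega),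
    hneg (0 - 2) (W + 1) 0 (by omega), hneg (0 - 1) W (0 + 1) (by omega)] at h₁
  rw [hsaCoeff, sub_add_cancel, hneg (0 + 1) (W - 1) (0 - 1) (by omega),
    hneg (0 - 2) W 0 (by omega), hneg (0 - 1) (W - 1) (0 + 1) (by omega)] at h₂
  have hW0 : (W : ℝ) ≠ 0 := by positivity
  have hκ : κ * t 0 W 0 = 0 := by
    have : (W : ℝ) * (κ * t 0 W 0) = 0 := by push_cast at h₁; linear_combination -h₁
    simpa [hW0] using this
  have : α * W * t 0 W 0 ^ 2 = 0 := by
    push_cast at h₂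
    linear_combination t 0 W 0 * h₂ + ((W : ℝ) - 1) * t 0 (W - 1) 0 * hκ
  simpa [hα, hW0] using this

theorem vanishesAbove_pred (h : CoeffSolution α β κ lam t) (hα : α ≠ 0) {W : ℕ}
    (hW : VanishesAbove t W) : VanishesAbove t (W - 1) := by
  intro a b c hab habc
  rcases lt_or_ge (W : ℤ) (a + b) with hlt | hle
  · exact hW a b c hlt habc
  obtain rfl : b = W - a := by omega
  rcases lt_or_ge c 0 with hc | hc
  · exact h.eq_zero_of_neg _ _ _ (by omega)
  obtain ⟨N, rfl | rfl⟩ := Nat.even_or_odd' W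
  · push_cast at hW ⊢
    rcases lt_or_ge 0 c with hc1 | hc0
    · exact congrFun (h.slice_eq_zero_of_even hα hW c hc1 (by omega)) a
    obtain rfl : c = 0 := by omega
    have hW' : VanishesAbove t ((2 * N : ℕ) : ℤ) := by exact_mod_cast hW
    have hslice : (fun a => t a (2 * N - a) 0) = 0 := by
      refine eq_zero_of_formDeriv_eq_zero_of_apply_zero
        (fun a ha => h.eq_zero_of_neg _ _ _ (by omega)) (W := 2 * N) (α := α) ?_ ?_
      · funext a
        have := h.slice_rec hW' (c := 0) (by omega) a
        push_cast at this
        rw [← this, congrFun (h.slice_eq_zero_of_even hα hW 1 le_rfl (by omega)) a]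
        simp
      · simpa using h.coeff_y_pow_eq_zero hα (W := 2 * N) (by omega) hW'
    exact congrFun hslice a
  · exact congrFun (h.slice_eq_zero_of_odd hα ⟨N, rfl⟩ hW c (by omega)) a

theorem eq_zero_of_two_lt (h : CoeffSolution α β κ lam t) (hα : α ≠ 0) :
    ∀ a b c, 2 < a + b + c → t a b c = 0 := by
  obtain ⟨D, hD⟩ := h.eventually_zero
  have hall : ∀ W : ℤ, -1 ≤ W → VanishesAbove t W := by
    refine Int.forall_of_forall_gt_of_succ D (fun W hW _ a b c hab _ => ?_) fun W hnext hW => ?_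
    · rcases lt_or_ge c 0 with hc | hc
      · exact h.eq_zero_of_neg a b c (by omega)
      · exact hD a b c (by omega)
    · obtain ⟨n, hn⟩ := Int.eq_ofNat_of_zero_le (by omega : 0 ≤ W + 1)
      have := h.vanishesAbove_pred hα (W := n) (hn ▸ hnext (by omega))
      rwa [← hn, add_sub_cancel_right] at this
  intro a b c habc
  rcases lt_or_ge (-1) (a + b) with hab | hab
  · exact hall (-1) le_rfl a b c hab habc
  · exact h.eq_zero_of_neg a b c (by omega)

end CoeffSolution

end

/-- with α ≠ 0, every polynomial solution g of
X g = β₀ + β₁x + β₂y + β₃z has degree at most 2. -/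
theorem stmt_10 (α β κ lam β₀ β₁ β₂ β₃ : ℝ) (hα : α ≠ 0)
    (g : MvPolynomial (Fin 3) ℝ)
    (heq : (X 0 * (X 1 - 1) - C β * X 2) * pderiv 0 g
      + (C α * (1 - X 0 ^ 2) - C κ * X 1) * pderiv 1 g
      + (X 0 - C lam * X 2) * pderiv 2 g
      = C β₀ + C β₁ * X 0 + C β₂ * X 1 + C β₃ * X 2) :
    g.totalDegree ≤ 2 := by
  have hsol : CoeffSolution α β κ lam fun a b c => intCoeff ![a, b, c] g :=
    coeffSolution_intCoeff (by rw [hsaField, heq]; exact totalDegree_affine_le β₀ β₁ β₂ β₃)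
  refine totalDegree_le_of_intCoeff_eq_zero fun m hm => ?_
  rw [show m = ![m 0, m 1, m 2] by ext i; fin_cases i <;> rfl]
  exact hsol.eq_zero_of_two_lt hα _ _ _ (by simpa [Fin.sum_univ_three] using hm)
end

section
/- Let α ≠ 0, κ ≠ 0, λ ∈ ℝ. Suppose p̄ ∈ ℂ[y,z] satisfies (α - κy)·∂p̄/∂y - λz·∂p̄/∂z = n·(y-1)·p̄ for some integer n ≥ 1. Then p̄ = 0. -/
open MvPolynomial

lemma fse_C (a : ℂ) : finSuccEquiv ℂ 1 (C a) = Polynomial.C (C a) := by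
  simp [finSuccEquiv_apply]

lemma fse_pderiv0 (p : MvPolynomial (Fin 2) ℂ) :
    finSuccEquiv ℂ 1 (pderiv 0 p) = Polynomial.derivative (finSuccEquiv ℂ 1 p) := by
  induction p using MvPolynomial.induction_on with
  | C a => simp [fse_C]
  | add p q hp hq => simp [map_add, hp, hq]
  | mul_X p i hp =>
    rw [pderiv_mul]
    rcases Fin.eq_zero_or_eq_succ i with rfl | ⟨j, rfl⟩
    · rw [pderiv_X_self]
      simp [finSuccEquiv_X_zero, hp, Polynomial.derivative_mul, map_add, map_mul]
    · rw [pderiv_X_of_ne (Fin.succ_ne_zero j)]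
      simp [finSuccEquiv_X_succ, hp, Polynomial.derivative_mul, map_add, map_mul]

lemma fse_pderiv1 (p : MvPolynomial (Fin 2) ℂ) (k : ℕ) :
    Polynomial.coeff (finSuccEquiv ℂ 1 (pderiv 1 p)) k
      = pderiv 0 (Polynomial.coeff (finSuccEquiv ℂ 1 p) k) := by
  induction p using MvPolynomial.induction_on generalizing k with
  | C a =>
    rw [pderiv_C, fse_C, map_zero, Polynomial.coeff_C]
    split <;> simp
  | add p q hp hq => simp [map_add, hp, hq]
  | mul_X p i hp =>
    rw [pderiv_mul]
    rcases Fin.eq_zero_or_eq_succ i with rfl | ⟨j, rfl⟩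
    · rw [pderiv_X_of_ne (by exact fun h => one_ne_zero h.symm : (0 : Fin 2) ≠ 1)]
      rw [mul_zero, add_zero, map_mul, finSuccEquiv_X_zero, map_mul, finSuccEquiv_X_zero]
      cases k with
      | zero => simp [Polynomial.mul_coeff_zero, Polynomial.coeff_X_zero]
      | succ k => rw [Polynomial.coeff_mul_X, Polynomial.coeff_mul_X, hp]
    · have hj : j = 0 := Subsingleton.elim _ _
      subst hj
      have h1 : (Fin.succ 0 : Fin 2) = 1 := rfl
      have hX : finSuccEquiv ℂ 1 (X (1 : Fin 2)) = Polynomial.C (X 0) := by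
        rw [← h1]; exact finSuccEquiv_X_succ
      rw [h1, pderiv_X_self, mul_one, map_add]
      simp only [map_mul, hX, Polynomial.coeff_add, Polynomial.coeff_mul_C, hp, pderiv_mul,
        pderiv_X_self, mul_one]


/-- α ≠ 0, κ ≠ 0, λ ∈ ℝ. If p̄ ∈ ℂ[y,z] satisfies
(α - κy)∂p̄/∂y - λz∂p̄/∂z = n(y-1)p̄ for some integer n ≥ 1, then p̄ = 0. -/
theorem stmt_15 (α κ lam : ℝ) (hα : α ≠ 0) (hκ : κ ≠ 0) (n : ℕ) (hn : 1 ≤ n)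
    (p : MvPolynomial (Fin 2) ℂ)
    (heq : (C (α : ℂ) - C (κ : ℂ) * X 0) * pderiv 0 p
      - C (lam : ℂ) * X 1 * pderiv 1 p
      = (n : MvPolynomial (Fin 2) ℂ) * (X 0 - 1) * p) :
    p = 0 := by
  by_contra hp
  set Q : Polynomial (MvPolynomial (Fin 1) ℂ) := finSuccEquiv ℂ 1 p with hQdef
  have hQ : Q ≠ 0 := by
    intro h
    exact hp ((map_eq_zero_iff _ (finSuccEquiv ℂ 1).injective).mp h)
  set d : ℕ := Q.natDegree with hd
  have hX1 : finSuccEquiv ℂ 1 (X (1 : Fin 2)) = Polynomial.C (X 0) := by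
    have h1 : (Fin.succ 0 : Fin 2) = 1 := rfl
    rw [← h1]; exact finSuccEquiv_X_succ
  have E := congrArg (⇑(finSuccEquiv ℂ 1)) heq
  simp only [map_sub, map_mul, map_natCast, map_one, fse_C, finSuccEquiv_X_zero, hX1,
    fse_pderiv0, ← hQdef] at E
  -- E : (C (C α) - C (C κ) * X) * derivative Q - C (C lam) * C (X 0) * fse (pderiv 1 p)
  --     = n * (X - 1) * Q
  have E2 := congrArg (fun q : Polynomial (MvPolynomial (Fin 1) ℂ) => q.coeff (d + 1)) E
  simp only [Polynomial.coeff_sub, Polynomial.coeff_add] at E2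
  have hQd1 : Q.coeff (d + 1) = 0 :=
    Polynomial.coeff_eq_zero_of_natDegree_lt (by omega)
  have hQd2 : Q.coeff (d + 2) = 0 :=
    Polynomial.coeff_eq_zero_of_natDegree_lt (by omega)
  have hA1 : (Polynomial.derivative Q).coeff (d + 1) = 0 := by
    rw [Polynomial.coeff_derivative, hQd2, zero_mul]
  have hA0 : (Polynomial.derivative Q).coeff d = 0 := by
    rw [Polynomial.coeff_derivative, hQd1, zero_mul]
  have hB : (finSuccEquiv ℂ 1 (pderiv 1 p)).coeff (d + 1) = 0 := by
    rw [fse_pderiv1, ← hQdef, hQd1, map_zero]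
  have lhs0 : ((Polynomial.C (C (α:ℂ)) - Polynomial.C (C (κ:ℂ)) * Polynomial.X)
        * Polynomial.derivative Q
      - Polynomial.C (C (lam:ℂ)) * Polynomial.C (X 0)
        * (finSuccEquiv ℂ 1 (pderiv 1 p))).coeff (d + 1) = 0 := by
    simp only [Polynomial.coeff_sub, sub_mul, mul_assoc, Polynomial.coeff_C_mul,
      Polynomial.coeff_X_mul, hA1, hA0, hB, mul_zero, sub_zero, zero_sub, neg_zero,
      sub_self]
  have rhs : (((n : Polynomial (MvPolynomial (Fin 1) ℂ))) * (Polynomial.X - 1) * Q).coeff (d + 1)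
      = (n : MvPolynomial (Fin 1) ℂ) * Q.leadingCoeff := by
    have : ((n : Polynomial (MvPolynomial (Fin 1) ℂ))) * (Polynomial.X - 1) * Q
        = (n : Polynomial (MvPolynomial (Fin 1) ℂ)) * (Polynomial.X * Q)
          - (n : Polynomial (MvPolynomial (Fin 1) ℂ)) * Q := by ring
    rw [this, Polynomial.coeff_sub, ← Polynomial.C_eq_natCast, Polynomial.coeff_C_mul,
      Polynomial.coeff_C_mul, Polynomial.coeff_X_mul, hQd1, mul_zero, sub_zero,
      Polynomial.leadingCoeff]
  rw [E] at lhs0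
  rw [rhs] at lhs0
  have hn0 : (n : MvPolynomial (Fin 1) ℂ) ≠ 0 := by
    exact_mod_cast Nat.cast_ne_zero.mpr (by omega)
  exact Polynomial.leadingCoeff_ne_zero.mpr hQ (by
    rcases mul_eq_zero.mp lhs0 with h | h
    · exact absurd h hn0
    · exact h)
end

section
/- Let α ≠ 0 and λ ∈ ℝ, β = κ = 0. Along any solution (x(t), y(t), z(t)) of ẋ = x(y-1), ẏ = α(1-x²), ż = x - λz with x(t) > 0 for all t, the quantity α·ln(x(t)) - α·x(t)²/2 - y(t)²/2 + y(t) is constant in t. -/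
/-! Along the flow, the time derivative of `α log x - α x²/2 - y²/2 + y` is
`α (y - 1) - α x² (y - 1) - (y - 1) α (1 - x²) = 0`. -/

noncomputable def hsaFirstIntegral (α x y : ℝ) : ℝ :=
  α * Real.log x - α * x ^ 2 / 2 - y ^ 2 / 2 + y

theorem hasDerivAt_hsaFirstIntegral_eq_zero {α t : ℝ} {x y : ℝ → ℝ} (hxt : x t ≠ 0)
    (hx : HasDerivAt x (x t * (y t - 1)) t) (hy : HasDerivAt y (α * (1 - x t ^ 2)) t) :
    HasDerivAt (fun s => hsaFirstIntegral α (x s) (y s)) 0 t := by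
  have h := (((hx.log hxt).const_mul α).sub ((hx.pow 2).const_mul α |>.div_const 2)).sub
    ((hy.pow 2).div_const 2) |>.add hy
  refine h.congr_deriv ?_
  rw [mul_div_cancel_left₀ _ hxt]
  push_cast
  ring

theorem stmt_18_general (α : ℝ) (x y : ℝ → ℝ)
    (hxpos : ∀ t, 0 < x t)
    (hx : ∀ t, HasDerivAt x (x t * (y t - 1)) t)
    (hy : ∀ t, HasDerivAt y (α * (1 - x t ^ 2)) t) :
    ∀ s t : ℝ,
      α * Real.log (x s) - α * x s ^ 2 / 2 - y s ^ 2 / 2 + y s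
        = α * Real.log (x t) - α * x t ^ 2 / 2 - y t ^ 2 / 2 + y t := by
  have hF (t : ℝ) := hasDerivAt_hsaFirstIntegral_eq_zero (hxpos t).ne' (hx t) (hy t)
  exact is_const_of_deriv_eq_zero (fun t => (hF t).differentiableAt) (fun t => (hF t).deriv)

/-- α ≠ 0, β = κ = 0. Along any solution of
ẋ = x(y-1), ẏ = α(1-x²), ż = x - λz with x(t) > 0 for all t, the quantity
α ln x - αx²/2 - y²/2 + y is constant. -/
theorem stmt_18 (α lam : ℝ) (hα : α ≠ 0) (x y z : ℝ → ℝ)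
    (hxpos : ∀ t, 0 < x t)
    (hx : ∀ t, HasDerivAt x (x t * (y t - 1)) t)
    (hy : ∀ t, HasDerivAt y (α * (1 - x t ^ 2)) t)
    (hz : ∀ t, HasDerivAt z (x t - lam * z t) t) :
    ∀ s t : ℝ,
      α * Real.log (x s) - α * x s ^ 2 / 2 - y s ^ 2 / 2 + y s
        = α * Real.log (x t) - α * x t ^ 2 / 2 - y t ^ 2 / 2 + y t :=
  stmt_18_general α x y hxpos hx hy
end
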